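/- If X is a Q-game and Y is a P-game, then X + Y is a Q-game. -/
import Mathlib


/-- Three-player impartial games: well-founded game trees. -/
inductive G3 : Type 1 where
  | mk : (ι : Type) → (ι → G3) → G3

namespace G3

/-- The index type of options (moves) of a game. -/
def moves : G3 → Type
  | mk ι _ => ι

/-- The option of a game corresponding to a move. -/
def moveFn : (g : G3) → moves g → G3
  | mk _ f => f

/-- Disjunctive sum: move in exactly one component. -/
noncomputable def add : G3 → G3 → G3 :=
  G3.rec (fun ι f ihf =>
    G3.rec (fun κ g ihg =>
      mk (ι ⊕ κ) (fun x =>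
        match x with
        | Sum.inl i => ihf i (mk κ g)
        | Sum.inr j => ihg j)))

/-- The four outcome types of a three-player impartial game. -/
inductive PType : Type
  | N | O | P | Q
deriving DecidableEq

open Classical in
/-- The type of a game: `N` iff some option is a `P`-game; `O` iff it has at least
one option and all options are `N`-games; `P` iff all options are `O`-games;
`Q` otherwise. -/
noncomputable def typ : G3 → PType
  | mk ι f =>
    if ∃ i, typ (f i) = PType.P then PType.N
    else if Nonempty ι ∧ ∀ i, typ (f i) = PType.N then PType.O
    else if ∀ i, typ (f i) = PType.O then PType.P
    else PType.Q

/-- The Nim heap of size `n`: options are heaps of sizes `0, …, n-1`. -/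
def nim : ℕ → G3
  | n => mk (Fin n) (fun i => nim i)
termination_by n => n
decreasing_by exact i.isLt

/-- The sum of `n` Nim heaps of size 1. -/
noncomputable def ones : ℕ → G3
  | 0 => nim 0
  | n + 1 => add (ones n) (nim 1)

/-! ### Auxiliary lemmas -/

lemma add_mk (ι κ : Type) (f : ι → G3) (g : κ → G3) :
    add (mk ι f) (mk κ g) = mk (ι ⊕ κ) (fun x =>
      match x with
      | Sum.inl i => add (f i) (mk κ g)
      | Sum.inr j => add (mk ι f) (g j)) := rfl

open Classical in
lemma typ_mk (ι : Type) (f : ι → G3) :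
    typ (mk ι f) =
      if ∃ i, typ (f i) = PType.P then PType.N
      else if Nonempty ι ∧ ∀ i, typ (f i) = PType.N then PType.O
      else if ∀ i, typ (f i) = PType.O then PType.P
      else PType.Q := by rw [typ]

lemma typ_eq_N_iff {ι : Type} {f : ι → G3} :
    typ (mk ι f) = PType.N ↔ ∃ i, typ (f i) = PType.P := by
  rw [typ_mk]; split_ifs with h1 h2 h3 <;> simp_all

lemma typ_eq_O_iff {ι : Type} {f : ι → G3} :
    typ (mk ι f) = PType.O ↔ Nonempty ι ∧ ∀ i, typ (f i) = PType.N := by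
  rw [typ_mk]; split_ifs with h1 h2 h3
  · obtain ⟨i, hi⟩ := h1
    refine iff_of_false (by simp) ?_
    rintro ⟨-, hN⟩
    rw [hN i] at hi; cases hi
  · exact iff_of_true rfl h2
  · exact iff_of_false (by simp) h2
  · exact iff_of_false (by simp) h2

lemma typ_eq_P_iff {ι : Type} {f : ι → G3} :
    typ (mk ι f) = PType.P ↔ ∀ i, typ (f i) = PType.O := by
  rw [typ_mk]; split_ifs with h1 h2 h3
  · obtain ⟨i, hi⟩ := h1
    refine iff_of_false (by simp) ?_
    intro hO; rw [hO i] at hi; cases hi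
  · obtain ⟨⟨i⟩, hN⟩ := h2
    refine iff_of_false (by simp) ?_
    intro hO; have := hN i; rw [hO i] at this; cases this
  · exact iff_of_true rfl h3
  · exact iff_of_false (by simp) h3

lemma of_typ_Q {ι : Type} {f : ι → G3} (h : typ (mk ι f) = PType.Q) :
    (∀ i, typ (f i) ≠ PType.P) ∧ (∃ i, typ (f i) ≠ PType.N) ∧
      (∃ i, typ (f i) ≠ PType.O) := by
  rw [typ_mk] at h
  split_ifs at h with h1 h2 h3
  push_neg at h1 h3
  obtain ⟨i3, hi3⟩ := h3
  have hne : Nonempty ι := ⟨i3⟩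
  have h2' : ¬ ∀ i, typ (f i) = PType.N := fun hall => h2 ⟨hne, hall⟩
  push_neg at h2'
  exact ⟨h1, h2', ⟨i3, hi3⟩⟩

lemma eq_Q_of_ne {t : PType} (h1 : t ≠ PType.N) (h2 : t ≠ PType.O)
    (h3 : t ≠ PType.P) : t = PType.Q := by cases t <;> simp_all

section SumHelpers

variable {ι κ : Type} {f : ι → G3} {g : κ → G3}

lemma typ_add_ne_N
    (hf : ∀ i, typ (add (f i) (mk κ g)) ≠ PType.P)
    (hg : ∀ j, typ (add (mk ι f) (g j)) ≠ PType.P) :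
    typ (add (mk ι f) (mk κ g)) ≠ PType.N := by
  rw [add_mk, Ne, typ_eq_N_iff]
  rintro ⟨(i | j), h⟩
  · exact hf i h
  · exact hg j h

lemma typ_add_ne_O_l (i : ι) (h : typ (add (f i) (mk κ g)) ≠ PType.N) :
    typ (add (mk ι f) (mk κ g)) ≠ PType.O := by
  rw [add_mk, Ne, typ_eq_O_iff]
  rintro ⟨-, hN⟩
  exact h (hN (Sum.inl i))

lemma typ_add_ne_O_r (j : κ) (h : typ (add (mk ι f) (g j)) ≠ PType.N) :
    typ (add (mk ι f) (mk κ g)) ≠ PType.O := by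
  rw [add_mk, Ne, typ_eq_O_iff]
  rintro ⟨-, hN⟩
  exact h (hN (Sum.inr j))

lemma typ_add_ne_P_l (i : ι) (h : typ (add (f i) (mk κ g)) ≠ PType.O) :
    typ (add (mk ι f) (mk κ g)) ≠ PType.P := by
  rw [add_mk, Ne, typ_eq_P_iff]
  intro hO
  exact h (hO (Sum.inl i))

lemma typ_add_ne_P_r (j : κ) (h : typ (add (mk ι f) (g j)) ≠ PType.O) :
    typ (add (mk ι f) (mk κ g)) ≠ PType.P := by
  rw [add_mk, Ne, typ_eq_P_iff]
  intro hO
  exact h (hO (Sum.inr j))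

end SumHelpers

/-- The big simultaneous-induction invariant. -/
structure Phi (X Y : G3) : Prop where
  qp : typ X = PType.Q → typ Y = PType.P → typ (add X Y) = PType.Q
  pq : typ X = PType.P → typ Y = PType.Q → typ (add X Y) = PType.Q
  np_o : typ X = PType.N → typ Y = PType.P → typ (add X Y) ≠ PType.O
  np_p : typ X = PType.N → typ Y = PType.P → typ (add X Y) ≠ PType.P
  pn_o : typ X = PType.P → typ Y = PType.N → typ (add X Y) ≠ PType.O
  pn_p : typ X = PType.P → typ Y = PType.N → typ (add X Y) ≠ PType.P
  op_n : typ X = PType.O → typ Y = PType.P → typ (add X Y) ≠ PType.N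
  op_p : typ X = PType.O → typ Y = PType.P → typ (add X Y) ≠ PType.P
  po_n : typ X = PType.P → typ Y = PType.O → typ (add X Y) ≠ PType.N
  po_p : typ X = PType.P → typ Y = PType.O → typ (add X Y) ≠ PType.P
  pp_n : typ X = PType.P → typ Y = PType.P → typ (add X Y) ≠ PType.N
  pp_o : typ X = PType.P → typ Y = PType.P → typ (add X Y) ≠ PType.O
  oo_p : typ X = PType.O → typ Y = PType.O → typ (add X Y) ≠ PType.P
  no_o : typ X = PType.N → typ Y = PType.O → typ (add X Y) ≠ PType.O
  on_o : typ X = PType.O → typ Y = PType.N → typ (add X Y) ≠ PType.O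
  qo_p : typ X = PType.Q → typ Y = PType.O → typ (add X Y) ≠ PType.P
  oq_p : typ X = PType.O → typ Y = PType.Q → typ (add X Y) ≠ PType.P
  qn_o : typ X = PType.Q → typ Y = PType.N → typ (add X Y) ≠ PType.O
  nq_o : typ X = PType.N → typ Y = PType.Q → typ (add X Y) ≠ PType.O

theorem phi_all : ∀ X Y : G3, Phi X Y := by
  intro X
  induction X with
  | mk ι f ihf =>
    intro Y
    induction Y with
    | mk κ g ihg =>
      constructor
      -- qp
      · intro hX hY
        obtain ⟨hXnP, ⟨iN, hiN⟩, ⟨iO, hiO⟩⟩ := of_typ_Q hX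
        have hgO := typ_eq_P_iff.1 hY
        have hnN : typ (add (mk ι f) (mk κ g)) ≠ PType.N := by
          refine typ_add_ne_N (fun i => ?_) (fun j => ?_)
          · cases h : typ (f i) with
            | N => exact (ihf i _).np_p h hY
            | O => exact (ihf i _).op_p h hY
            | P => exact absurd h (hXnP i)
            | Q => rw [(ihf i _).qp h hY]; decide
          · exact (ihg j).qo_p hX (hgO j)
        have hnO : typ (add (mk ι f) (mk κ g)) ≠ PType.O := by
          refine typ_add_ne_O_l iN ?_
          cases h : typ (f iN) with
          | N => exact absurd h hiN
          | O => exact (ihf iN _).op_n h hY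
          | P => exact absurd h (hXnP iN)
          | Q => rw [(ihf iN _).qp h hY]; decide
        have hnP : typ (add (mk ι f) (mk κ g)) ≠ PType.P := by
          refine typ_add_ne_P_l iO ?_
          cases h : typ (f iO) with
          | N => exact (ihf iO _).np_o h hY
          | O => exact absurd h hiO
          | P => exact absurd h (hXnP iO)
          | Q => rw [(ihf iO _).qp h hY]; decide
        exact eq_Q_of_ne hnN hnO hnP
      -- pq
      · intro hX hY
        obtain ⟨hYnP, ⟨jN, hjN⟩, ⟨jO, hjO⟩⟩ := of_typ_Q hY
        have hfO := typ_eq_P_iff.1 hX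
        have hnN : typ (add (mk ι f) (mk κ g)) ≠ PType.N := by
          refine typ_add_ne_N (fun i => ?_) (fun j => ?_)
          · exact (ihf i _).oq_p (hfO i) hY
          · cases h : typ (g j) with
            | N => exact (ihg j).pn_p hX h
            | O => exact (ihg j).po_p hX h
            | P => exact absurd h (hYnP j)
            | Q => rw [(ihg j).pq hX h]; decide
        have hnO : typ (add (mk ι f) (mk κ g)) ≠ PType.O := by
          refine typ_add_ne_O_r jN ?_
          cases h : typ (g jN) with
          | N => exact absurd h hjN
          | O => exact (ihg jN).po_n hX h
          | P => exact absurd h (hYnP jN)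
          | Q => rw [(ihg jN).pq hX h]; decide
        have hnP : typ (add (mk ι f) (mk κ g)) ≠ PType.P := by
          refine typ_add_ne_P_r jO ?_
          cases h : typ (g jO) with
          | N => exact (ihg jO).pn_o hX h
          | O => exact absurd h hjO
          | P => exact absurd h (hYnP jO)
          | Q => rw [(ihg jO).pq hX h]; decide
        exact eq_Q_of_ne hnN hnO hnP
      -- np_o
      · intro hX hY
        obtain ⟨i0, hi0⟩ := typ_eq_N_iff.1 hX
        exact typ_add_ne_O_l i0 ((ihf i0 _).pp_n hi0 hY)
      -- np_p
      · intro hX hY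
        obtain ⟨i0, hi0⟩ := typ_eq_N_iff.1 hX
        exact typ_add_ne_P_l i0 ((ihf i0 _).pp_o hi0 hY)
      -- pn_o
      · intro hX hY
        obtain ⟨j0, hj0⟩ := typ_eq_N_iff.1 hY
        exact typ_add_ne_O_r j0 ((ihg j0).pp_n hX hj0)
      -- pn_p
      · intro hX hY
        obtain ⟨j0, hj0⟩ := typ_eq_N_iff.1 hY
        exact typ_add_ne_P_r j0 ((ihg j0).pp_o hX hj0)
      -- op_n
      · intro hX hY
        obtain ⟨⟨i1⟩, hfN⟩ := typ_eq_O_iff.1 hX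
        have hgO := typ_eq_P_iff.1 hY
        refine typ_add_ne_N (fun i => ?_) (fun j => ?_)
        · exact (ihf i _).np_p (hfN i) hY
        · exact (ihg j).oo_p hX (hgO j)
      -- op_p
      · intro hX hY
        obtain ⟨⟨i1⟩, hfN⟩ := typ_eq_O_iff.1 hX
        exact typ_add_ne_P_l i1 ((ihf i1 _).np_o (hfN i1) hY)
      -- po_n
      · intro hX hY
        have hfO := typ_eq_P_iff.1 hX
        obtain ⟨⟨j1⟩, hgN⟩ := typ_eq_O_iff.1 hY
        refine typ_add_ne_N (fun i => ?_) (fun j => ?_)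
        · exact (ihf i _).oo_p (hfO i) hY
        · exact (ihg j).pn_p hX (hgN j)
      -- po_p
      · intro hX hY
        obtain ⟨⟨j1⟩, hgN⟩ := typ_eq_O_iff.1 hY
        exact typ_add_ne_P_r j1 ((ihg j1).pn_o hX (hgN j1))
      -- pp_n
      · intro hX hY
        have hfO := typ_eq_P_iff.1 hX
        have hgO := typ_eq_P_iff.1 hY
        refine typ_add_ne_N (fun i => ?_) (fun j => ?_)
        · exact (ihf i _).op_p (hfO i) hY
        · exact (ihg j).po_p hX (hgO j)
      -- pp_o
      · intro hX hY
        have hfO := typ_eq_P_iff.1 hX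
        have hgO := typ_eq_P_iff.1 hY
        intro h
        rw [add_mk, typ_eq_O_iff] at h
        obtain ⟨⟨x⟩, hall⟩ := h
        cases x with
        | inl i => exact (ihf i _).op_n (hfO i) hY (hall (Sum.inl i))
        | inr j => exact (ihg j).po_n hX (hgO j) (hall (Sum.inr j))
      -- oo_p
      · intro hX hY
        obtain ⟨⟨i1⟩, hfN⟩ := typ_eq_O_iff.1 hX
        exact typ_add_ne_P_l i1 ((ihf i1 _).no_o (hfN i1) hY)
      -- no_o
      · intro hX hY
        obtain ⟨i0, hi0⟩ := typ_eq_N_iff.1 hX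
        exact typ_add_ne_O_l i0 ((ihf i0 _).po_n hi0 hY)
      -- on_o
      · intro hX hY
        obtain ⟨j0, hj0⟩ := typ_eq_N_iff.1 hY
        exact typ_add_ne_O_r j0 ((ihg j0).op_n hX hj0)
      -- qo_p
      · intro hX hY
        obtain ⟨⟨j1⟩, hgN⟩ := typ_eq_O_iff.1 hY
        exact typ_add_ne_P_r j1 ((ihg j1).qn_o hX (hgN j1))
      -- oq_p
      · intro hX hY
        obtain ⟨⟨i1⟩, hfN⟩ := typ_eq_O_iff.1 hX
        exact typ_add_ne_P_l i1 ((ihf i1 _).nq_o (hfN i1) hY)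
      -- qn_o
      · intro hX hY
        obtain ⟨j0, hj0⟩ := typ_eq_N_iff.1 hY
        refine typ_add_ne_O_r j0 ?_
        rw [(ihg j0).qp hX hj0]; decide
      -- nq_o
      · intro hX hY
        obtain ⟨i0, hi0⟩ := typ_eq_N_iff.1 hX
        refine typ_add_ne_O_l i0 ?_
        rw [(ihf i0 _).pq hi0 hY]; decide

theorem Q_plus_P_eq_Q (X Y : G3) (hX : typ X = PType.Q) (hY : typ Y = PType.P) :
    typ (add X Y) = PType.Q := (phi_all X Y).qp hX hY

end G3
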